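/- The Jucys–Murphy elements for A_n commute pairwise: Y_i·Y_j = Y_j·Y_i for all 1 ≤ i, j ≤ n. -/

import Mathlib

/-- The group algebra ℂ[S] of the group of permutations of ℕ (containing every ℂ[S_n]
and ℂ[A_n]). -/
abbrev GA := MonoidAlgebra ℂ (Equiv.Perm ℕ)

/-- The Jucys–Murphy element X_i = Σ_{1 ≤ j < i} (j,i) of the symmetric group. -/
noncomputable def X (i : ℕ) : GA :=
  ∑ j ∈ Finset.Ico 1 i, MonoidAlgebra.single (Equiv.swap j i) 1

/-- The Jucys–Murphy elements for the alternating group: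
Y_1 = 0, Y_2 = 1 and Y_i = (1,2)·X_i for i ≥ 3. -/
noncomputable def Y (i : ℕ) : GA :=
  if i ≤ 1 then 0 else if i = 2 then 1
  else MonoidAlgebra.single (Equiv.swap 1 2) 1 * X i

/-- A permutation fixing `j` and stabilizing `Ico 1 j` commutes with `X j`. -/
lemma single_comm_X (σ : Equiv.Perm ℕ) (j : ℕ) (hσj : σ j = j)
    (h1 : ∀ k ∈ Finset.Ico 1 j, σ k ∈ Finset.Ico 1 j)
    (h2 : ∀ k ∈ Finset.Ico 1 j, σ⁻¹ k ∈ Finset.Ico 1 j) :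
    MonoidAlgebra.single (M := Equiv.Perm ℕ) σ (1 : ℂ) * X j
      = X j * MonoidAlgebra.single σ 1 := by
  unfold X
  rw [Finset.mul_sum, Finset.sum_mul]
  calc ∑ k ∈ Finset.Ico 1 j,
        MonoidAlgebra.single (M := Equiv.Perm ℕ) σ (1 : ℂ) *
          MonoidAlgebra.single (Equiv.swap k j) 1
      = ∑ k ∈ Finset.Ico 1 j,
        MonoidAlgebra.single (Equiv.swap (σ k) j) (1 : ℂ) *
          MonoidAlgebra.single σ 1 := by
        refine Finset.sum_congr rfl fun k _ => ?_
        rw [MonoidAlgebra.single_mul_single, MonoidAlgebra.single_mul_single,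
          one_mul, Equiv.mul_swap_eq_swap_mul, hσj]
    _ = ∑ k ∈ Finset.Ico 1 j,
        MonoidAlgebra.single (Equiv.swap k j) (1 : ℂ) *
          MonoidAlgebra.single σ 1 := by
        refine Finset.sum_nbij' (fun k => σ k) (fun k => σ⁻¹ k) h1 h2
          (fun k _ => ?_) (fun k _ => ?_) (fun k _ => rfl)
        · simp
        · simp

/-- A swap `(k, i)` with `1 ≤ k < i < j` satisfies the hypotheses above. -/
lemma swap_stab {k i j : ℕ} (hk : 1 ≤ k) (hki : k < i) (hij : i < j) :
    Equiv.swap k i j = j ∧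
      (∀ m ∈ Finset.Ico 1 j, Equiv.swap k i m ∈ Finset.Ico 1 j) ∧
      (∀ m ∈ Finset.Ico 1 j, (Equiv.swap k i)⁻¹ m ∈ Finset.Ico 1 j) := by
  have hfix : Equiv.swap k i j = j :=
    Equiv.swap_apply_of_ne_of_ne (by omega) (by omega)
  have hmem : ∀ m ∈ Finset.Ico 1 j, Equiv.swap k i m ∈ Finset.Ico 1 j := by
    intro m hm
    rw [Finset.mem_Ico] at hm ⊢
    rcases eq_or_ne m k with rfl | hmk
    · rw [Equiv.swap_apply_left]; omega
    rcases eq_or_ne m i with rfl | hmi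
    · rw [Equiv.swap_apply_right]; omega
    · rw [Equiv.swap_apply_of_ne_of_ne hmk hmi]; omega
  exact ⟨hfix, hmem, by rw [Equiv.swap_inv]; exact hmem⟩

lemma X_comm_lt {i j : ℕ} (hij : i < j) : X i * X j = X j * X i := by
  have step : X i * X j = ∑ k ∈ Finset.Ico 1 i, X j * MonoidAlgebra.single (Equiv.swap k i) 1 := by
    rw [X, Finset.sum_mul]
    refine Finset.sum_congr rfl fun k hk => ?_
    rw [Finset.mem_Ico] at hk
    obtain ⟨h0, h1, h2⟩ := swap_stab hk.1 hk.2 hij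
    exact single_comm_X _ j h0 h1 h2
  rw [step, ← Finset.mul_sum]
  rfl

lemma X_comm (i j : ℕ) : X i * X j = X j * X i := by
  rcases lt_trichotomy i j with h | rfl | h
  · exact X_comm_lt h
  · rfl
  · exact (X_comm_lt h).symm

/-- `(1,2)` commutes with `X i` for `i ≥ 3` (indeed for all `i ≠ 1, 2`). -/
lemma swap12_comm_X {i : ℕ} (hi : 3 ≤ i) :
    MonoidAlgebra.single (M := Equiv.Perm ℕ) (Equiv.swap 1 2) (1 : ℂ) * X i
      = X i * MonoidAlgebra.single (Equiv.swap 1 2) 1 := by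
  obtain ⟨h0, h1, h2⟩ := swap_stab (k := 1) (i := 2) (j := i) le_rfl one_lt_two hi
  exact single_comm_X _ i h0 h1 h2

lemma Y_big {i : ℕ} (hi : 3 ≤ i) :
    Y i = MonoidAlgebra.single (Equiv.swap 1 2) 1 * X i := by
  unfold Y
  rw [if_neg (by omega), if_neg (by omega)]

lemma Y_comm_big {i j : ℕ} (hi : 3 ≤ i) (hj : 3 ≤ j) : Y i * Y j = Y j * Y i := by
  have key : ∀ a b : ℕ, 3 ≤ a → 3 ≤ b → Y a * Y b = X a * X b := by
    intro a b ha hb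
    rw [Y_big ha, Y_big hb, mul_assoc, ← mul_assoc (X a), ← swap12_comm_X ha,
      ← mul_assoc, ← mul_assoc, MonoidAlgebra.single_mul_single,
      Equiv.swap_mul_self, one_mul]
    rw [show MonoidAlgebra.single (M := Equiv.Perm ℕ) (1 : Equiv.Perm ℕ) (1 : ℂ) = 1 from rfl,
      one_mul]
  rw [key i j hi hj, key j i hj hi, X_comm]

theorem stmt8 (n i j : ℕ) (hi1 : 1 ≤ i) (hin : i ≤ n) (hj1 : 1 ≤ j) (hjn : j ≤ n) :
    Y i * Y j = Y j * Y i := by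
  have trivY : ∀ a : ℕ, a ≤ 2 → (Y a = 0 ∨ Y a = 1) := by
    intro a ha
    unfold Y
    rcases le_or_gt a 1 with h | h
    · left; rw [if_pos h]
    · right; rw [if_neg (by omega), if_pos (by omega)]
  rcases le_or_gt i 2 with hi | hi
  · rcases trivY i hi with h | h <;> simp [h]
  rcases le_or_gt j 2 with hj | hj
  · rcases trivY j hj with h | h <;> simp [h]
  exact Y_comm_big hi hj
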